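/- Let g_1, …, g_n be pairwise permutable transcendental entire functions of bounded type (g_i ∘ g_j = g_j ∘ g_i for all i, j) satisfying g_i(Sing(g_j⁻¹)) ⊆ Sing(g_j⁻¹) for all 1 ≤ i, j ≤ n with i ≠ j. Then P(g_1 ∘ ⋯ ∘ g_n) ⊆ ⋃_{i=1}^{n} P(g_i). -/

import Mathlib

open Filter Topology Set Function

noncomputable section

/-- An entire (everywhere differentiable) function that is not a polynomial. -/
def TranscendentalEntire (f : ℂ → ℂ) : Prop :=
  Differentiable ℂ f ∧ ¬ ∃ p : Polynomial ℂ, ∀ z, f z = p.eval z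

/-- A transcendental semigroup: a nonempty set of transcendental entire functions
closed under composition. -/
def IsTranscendentalSemigroup (G : Set (ℂ → ℂ)) : Prop :=
  G.Nonempty ∧ (∀ f ∈ G, TranscendentalEntire f) ∧ ∀ f ∈ G, ∀ g ∈ G, f ∘ g ∈ G

/-- The semigroup is abelian: any two elements commute under composition. -/
def IsAbelianSemigroup (G : Set (ℂ → ℂ)) : Prop :=
  ∀ f ∈ G, ∀ g ∈ G, f ∘ g = g ∘ f

/-- The escaping set of a semigroup `G`: points at which every sequence in `G`
has a subsequence diverging to infinity. -/
def escapingSet (G : Set (ℂ → ℂ)) : Set ℂ :=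
  {z | ∀ s : ℕ → ℂ → ℂ, (∀ k, s k ∈ G) →
    ∃ φ : ℕ → ℕ, StrictMono φ ∧
      Tendsto (fun j => ‖s (φ j) z‖) atTop atTop}

/-- A sequence of functions diverges to ∞ locally uniformly on `U`. -/
def DivergesLocallyUniformlyOn (F : ℕ → ℂ → ℂ) (U : Set ℂ) : Prop :=
  ∀ K ⊆ U, IsCompact K → ∀ R > (0 : ℝ), ∀ᶠ n in atTop, ∀ w ∈ K, R < ‖F n w‖

/-- The Fatou set of a family `G` of entire functions. -/
def FatouSet (G : Set (ℂ → ℂ)) : Set ℂ :=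
  {z | ∃ U : Set ℂ, IsOpen U ∧ z ∈ U ∧ ∀ s : ℕ → ℂ → ℂ, (∀ k, s k ∈ G) →
    ∃ φ : ℕ → ℕ, StrictMono φ ∧
      ((∃ h : ℂ → ℂ, DifferentiableOn ℂ h U ∧
          TendstoLocallyUniformlyOn (fun j => s (φ j)) h atTop U) ∨
        DivergesLocallyUniformlyOn (fun j => s (φ j)) U)}

/-- The Julia set of a family `G`, the complement in `ℂ` of the Fatou set. -/
def JuliaSet (G : Set (ℂ → ℂ)) : Set ℂ := (FatouSet G)ᶜ

/-- The set of (positive) iterates of a single function. -/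
def iteratesSet (f : ℂ → ℂ) : Set (ℂ → ℂ) := {g | ∃ n : ℕ, 0 < n ∧ g = f^[n]}

/-- The Fatou set of a single function, defined via its iterates. -/
def FatouSetFn (f : ℂ → ℂ) : Set ℂ := FatouSet (iteratesSet f)

/-- The Julia set of a single function. -/
def JuliaSetFn (f : ℂ → ℂ) : Set ℂ := (FatouSetFn f)ᶜ

/-- The escaping set of a single function. -/
def escapingSetFn (f : ℂ → ℂ) : Set ℂ :=
  {z | Tendsto (fun n => ‖f^[n] z‖) atTop atTop}

/-- Critical values of `f`. -/
def criticalValues (f : ℂ → ℂ) : Set ℂ := {v | ∃ w, deriv f w = 0 ∧ f w = v}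

/-- Asymptotic values of `f`: limits of `f` along curves tending to infinity. -/
def asymptoticValues (f : ℂ → ℂ) : Set ℂ :=
  {v | ∃ γ : ℝ → ℂ, ContinuousOn γ (Set.Ici (0:ℝ)) ∧
    Tendsto (fun t => ‖γ t‖) atTop atTop ∧
    Tendsto (fun t => f (γ t)) atTop (nhds v)}

/-- `Sing(f⁻¹)`: closure of the set of critical and asymptotic values of `f`. -/
def SingInv (f : ℂ → ℂ) : Set ℂ := closure (criticalValues f ∪ asymptoticValues f)

/-- `f` is of bounded type: `Sing(f⁻¹)` is bounded. -/
def BoundedType (f : ℂ → ℂ) : Prop := Bornology.IsBounded (SingInv f)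

/-- The postsingular set of `f`. -/
def postSing (f : ℂ → ℂ) : Set ℂ := closure (⋃ n : ℕ, f^[n] '' SingInv f)

/-- Membership in the semigroup generated by the functions `g i`:
all finite compositions of generators. -/
inductive InGenSemigroup {n : ℕ} (g : Fin n → ℂ → ℂ) : (ℂ → ℂ) → Prop
  | base (i : Fin n) : InGenSemigroup g (g i)
  | comp (f h : ℂ → ℂ) : InGenSemigroup g f → InGenSemigroup g h → InGenSemigroup g (f ∘ h)

/-- The semigroup generated by `g 1, …, g n`. -/
def genSemigroup {n : ℕ} (g : Fin n → ℂ → ℂ) : Set (ℂ → ℂ) := {f | InGenSemigroup g f}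

/-- `U` is a connected component of the Fatou set of `G`. -/
def IsFatouComponent (G : Set (ℂ → ℂ)) (U : Set ℂ) : Prop :=
  ∃ z ∈ FatouSet G, U = connectedComponentIn (FatouSet G) z

/-- `U` is a wandering domain of `G`: a Fatou component whose images lie in
infinitely many distinct Fatou components. -/
def IsWanderingDomain (G : Set (ℂ → ℂ)) (U : Set ℂ) : Prop :=
  IsFatouComponent G U ∧
    {V : Set ℂ | ∃ g ∈ G, ∃ z ∈ U, V = connectedComponentIn (FatouSet G) (g z)}.Infinite

/-- `G` has no wandering domains. -/
def HasNoWanderingDomains (G : Set (ℂ → ℂ)) : Prop := ∀ U : Set ℂ, ¬ IsWanderingDomain G U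

/-- `z` is a rationally indifferent periodic point of `f`. -/
def IsRatIndiffPeriodic (f : ℂ → ℂ) (z : ℂ) : Prop :=
  ∃ p : ℕ, 0 < p ∧ f^[p] z = z ∧ ∃ k : ℕ, 0 < k ∧ (deriv (f^[p]) z) ^ k = 1

/-- `z` is a repelling periodic point of `f`. -/
def IsRepellingPeriodic (f : ℂ → ℂ) (z : ℂ) : Prop :=
  ∃ p : ℕ, 0 < p ∧ f^[p] z = z ∧ 1 < ‖deriv (f^[p]) z‖

/-- `ψ` is a limit function of the sequence `F` on `V`: some subsequence converges
locally uniformly to `ψ` on `V`. -/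
def IsLimitFunctionOn (F : ℕ → ℂ → ℂ) (ψ : ℂ → ℂ) (V : Set ℂ) : Prop :=
  ∃ φ : ℕ → ℕ, StrictMono φ ∧ TendstoLocallyUniformlyOn (fun j => F (φ j)) ψ atTop V

/-- `f` is hyperbolic: its postsingular set is a compact subset of its Fatou set. -/
def IsHyperbolic (f : ℂ → ℂ) : Prop :=
  IsCompact (postSing f) ∧ postSing f ⊆ FatouSetFn f

/-- The postsingular set of a semigroup `G`. -/
def postSingSemigroup (G : Set (ℂ → ℂ)) : Set ℂ := closure (⋃ f ∈ G, SingInv f)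

/-- A set `S` is finite and consists only of rationally indifferent or repelling
periodic points of `f` and preimages (under iterates of `f`) of such points. -/
def FinitePreperiodicRI (f : ℂ → ℂ) (S : Set ℂ) : Prop :=
  S.Finite ∧ ∀ w ∈ S, ∃ m : ℕ,
    IsRatIndiffPeriodic f (f^[m] w) ∨ IsRepellingPeriodic f (f^[m] w)

end

/-!
The singular values of `f ∘ h` are singular values of `f` or images under `f` of singular values
of `h`; for asymptotic values this is because, along a curve on which `f ∘ h` has a limit, the
curve `h ∘ γ` either escapes, converges, or oscillates between two circles, and in the last case
`f` takes the limit value on every intermediate circle, so `f` is constant. Hence a closed set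
that contains `Sing(g_i⁻¹)` and is invariant under every `g_i` contains the singular values of
every composition of the `g_i`, and so its postsingular set. The union of the `P(g_i)` is such a
set: `g_j` commutes with `g_i` and preserves `Sing(g_i⁻¹)`, hence preserves `P(g_i)`.
-/

lemma TranscendentalEntire.exists_ne {f : ℂ → ℂ} (hf : TranscendentalEntire f) (v : ℂ) :
    ∃ z, f z ≠ v := by
  by_contra! h
  exact hf.2 ⟨Polynomial.C v, fun z => by rw [Polynomial.eval_C, h z]⟩

lemma frequently_eq_of_frequently_le_of_frequently_ge {φ : ℝ → ℝ} {a r : ℝ}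
    (hφ : ContinuousOn φ (Ici a)) (h₁ : ∃ᶠ t in atTop, φ t ≤ r)
    (h₂ : ∃ᶠ t in atTop, r ≤ φ t) : ∃ᶠ t in atTop, φ t = r := by
  rw [frequently_atTop] at h₁ h₂ ⊢
  intro T
  obtain ⟨t₁, ht₁, hφ₁⟩ := h₁ (max T a)
  obtain ⟨t₂, ht₂, hφ₂⟩ := h₂ t₁
  have hIcc : Icc t₁ t₂ ⊆ Ici a := fun t ht => (le_max_right T a).trans (ht₁.trans ht.1)
  obtain ⟨t, ht, hφt⟩ := intermediate_value_Icc ht₂ (hφ.mono hIcc) ⟨hφ₁, hφ₂⟩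
  exact ⟨t, (le_max_left T a).trans (ht₁.trans ht.1), hφt⟩

lemma IsCompact.exists_apply_eq_of_frequently_mem {ι X Y : Type*} [TopologicalSpace X]
    [TopologicalSpace Y] [T2Space Y] {K : Set X} (hK : IsCompact K) {l : Filter ι}
    {σ : ι → X} {f : X → Y} (hf : Continuous f) {v : Y} (hv : Tendsto (f ∘ σ) l (𝓝 v))
    (hσK : ∃ᶠ t in l, σ t ∈ K) : ∃ w ∈ K, f w = v := by
  obtain ⟨w, hwK, hw⟩ := hK.exists_mapClusterPt_of_frequently hσK
  exact ⟨w, hwK, eq_of_nhds_neBot ((hw.continuousAt_comp hf.continuousAt).clusterPt.mono hv).neBot⟩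

lemma exists_oscillation_of_not_tendsto {ι E : Type*} [NormedAddCommGroup E] [ProperSpace E]
    {l : Filter ι} {σ : ι → E} (hσ_escape : ¬ Tendsto (fun t => ‖σ t‖) l atTop)
    (hσ_conv : ∀ w, ¬ Tendsto σ l (𝓝 w)) :
    ∃ c r₁ r₂, r₁ < r₂ ∧ (∃ᶠ t in l, σ t ∈ Metric.ball c r₁) ∧
      ∃ᶠ t in l, σ t ∉ Metric.closedBall c r₂ := by
  obtain ⟨R, hR⟩ : ∃ R, ∃ᶠ t in l, ‖σ t‖ < R := by
    simpa [tendsto_atTop, Filter.not_eventually] using hσ_escape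
  obtain ⟨c, -, hc⟩ := (isCompact_closedBall (0 : E) R).exists_mapClusterPt_of_frequently
    (hR.mono fun _ ht => mem_closedBall_zero_iff.2 ht.le)
  obtain ⟨ε, hε, hfar⟩ : ∃ ε > 0, ∃ᶠ t in l, ε ≤ dist (σ t) c := by
    simpa [Metric.tendsto_nhds, Filter.not_eventually] using hσ_conv c
  refine ⟨c, ε / 3, ε / 2, by linarith, hc.frequently (Metric.ball_mem_nhds c (by positivity)),
    hfar.mono fun t ht hmem => ?_⟩
  linarith [Metric.mem_closedBall.1 hmem]

lemma exists_mem_sphere_apply_eq_of_frequently {X Y : Type*} [PseudoMetricSpace X]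
    [ProperSpace X] [TopologicalSpace Y] [T2Space Y] {f : X → Y} (hf : Continuous f)
    {σ : ℝ → X} {a : ℝ} (hσ : ContinuousOn σ (Ici a)) {v : Y} (hv : Tendsto (f ∘ σ) atTop (𝓝 v))
    {c : X} {r₁ r₂ r : ℝ} (h₁ : ∃ᶠ t in atTop, σ t ∈ Metric.ball c r₁)
    (h₂ : ∃ᶠ t in atTop, σ t ∉ Metric.closedBall c r₂) (hr : r ∈ Icc r₁ r₂) :
    ∃ w ∈ Metric.sphere c r, f w = v :=
  (isCompact_sphere c r).exists_apply_eq_of_frequently_mem hf hv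
    (frequently_eq_of_frequently_le_of_frequently_ge
      ((continuous_id.dist continuous_const).comp_continuousOn hσ)
      (h₁.mono fun _ ht => (Metric.mem_ball.1 ht |>.trans_le hr.1).le)
      (h₂.mono fun _ ht => (hr.2.trans_lt (not_le.1 ht)).le))

lemma Differentiable.eq_const_of_infinite_inter_preimage {f : ℂ → ℂ} (hf : Differentiable ℂ f)
    {K : Set ℂ} (hK : IsCompact K) {v : ℂ} (hinf : (K ∩ f ⁻¹' {v}).Infinite) : ∀ z, f z = v := by
  obtain ⟨z₀, -, hz₀⟩ := hinf.exists_accPt_of_subset_isCompact hK inter_subset_left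
  have hfreq : ∃ᶠ z in 𝓝[≠] z₀, f z = v := by
    rw [frequently_nhdsWithin_iff]
    exact (accPt_iff_frequently.mp hz₀).mono fun z hz => ⟨hz.2.2, hz.1⟩
  exact fun z => AnalyticOnNhd.eqOn_of_preconnected_of_frequently_eq
    (hf.differentiableOn.analyticOnNhd isOpen_univ) analyticOnNhd_const
    isPreconnected_univ (mem_univ z₀) hfreq (mem_univ z)

lemma Differentiable.eq_const_of_tendsto_of_oscillation {f : ℂ → ℂ} (hf : Differentiable ℂ f)
    {σ : ℝ → ℂ} {a : ℝ} (hσ : ContinuousOn σ (Ici a)) {v : ℂ}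
    (hv : Tendsto (f ∘ σ) atTop (𝓝 v)) {c : ℂ} {r₁ r₂ : ℝ} (h12 : r₁ < r₂)
    (h₁ : ∃ᶠ t in atTop, σ t ∈ Metric.ball c r₁)
    (h₂ : ∃ᶠ t in atTop, σ t ∉ Metric.closedBall c r₂) : ∀ z, f z = v := by
  refine hf.eq_const_of_infinite_inter_preimage (isCompact_closedBall c r₂)
    (Infinite.of_image (fun w => ‖w - c‖) ((Icc_infinite h12).mono fun r hr => ?_))
  obtain ⟨w, hw, hfw⟩ := exists_mem_sphere_apply_eq_of_frequently hf.continuous hσ hv h₁ h₂ hr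
  rw [mem_sphere_iff_norm] at hw
  exact ⟨w, ⟨mem_closedBall_iff_norm.2 (hw.trans_le hr.2), hfw⟩, hw⟩

lemma asymptoticValues_comp_subset {f h : ℂ → ℂ} (hf : Differentiable ℂ f)
    (hf_ne : ∀ v, ∃ z, f z ≠ v) (hh : Continuous h) :
    asymptoticValues (f ∘ h) ⊆ asymptoticValues f ∪ f '' asymptoticValues h := by
  rintro v ⟨γ, hγ, hγ_escape, hv⟩
  have hσ : ContinuousOn (h ∘ γ) (Ici 0) := hh.comp_continuousOn hγ
  by_cases hσ_escape : Tendsto (fun t => ‖h (γ t)‖) atTop atTop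
  · exact Or.inl ⟨h ∘ γ, hσ, hσ_escape, hv⟩
  by_cases hσ_conv : ∃ w, Tendsto (h ∘ γ) atTop (𝓝 w)
  · obtain ⟨w, hw⟩ := hσ_conv
    exact Or.inr ⟨w, ⟨γ, hγ, hγ_escape, hw⟩,
      tendsto_nhds_unique ((hf.continuous.tendsto w).comp hw) hv⟩
  obtain ⟨c, r₁, r₂, h12, h₁, h₂⟩ :=
    exists_oscillation_of_not_tendsto hσ_escape (not_exists.mp hσ_conv)
  obtain ⟨z, hz⟩ := hf_ne v
  exact absurd (hf.eq_const_of_tendsto_of_oscillation hσ hv h12 h₁ h₂ z) hz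

lemma criticalValues_comp_subset {f h : ℂ → ℂ} (hf : Differentiable ℂ f)
    (hh : Differentiable ℂ h) :
    criticalValues (f ∘ h) ⊆ criticalValues f ∪ f '' criticalValues h := by
  rintro v ⟨w, hd, hv⟩
  rw [deriv_comp w (hf (h w)) (hh w)] at hd
  rcases mul_eq_zero.mp hd with hfd | hhd
  · exact Or.inl ⟨h w, hfd, hv⟩
  · exact Or.inr ⟨h w, ⟨w, hhd, rfl⟩, hv⟩

lemma singInv_comp_subset {f h : ℂ → ℂ} (hf : Differentiable ℂ f) (hf_ne : ∀ v, ∃ z, f z ≠ v)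
    (hh : Differentiable ℂ h) : SingInv (f ∘ h) ⊆ SingInv f ∪ closure (f '' SingInv h) := by
  have hsub : criticalValues (f ∘ h) ∪ asymptoticValues (f ∘ h) ⊆
      (criticalValues f ∪ asymptoticValues f) ∪ f '' (criticalValues h ∪ asymptoticValues h) := by
    rw [image_union, union_union_union_comm]
    exact union_subset_union (criticalValues_comp_subset hf hh)
      (asymptoticValues_comp_subset hf hf_ne hh.continuous)
  calc SingInv (f ∘ h)
      ⊆ closure ((criticalValues f ∪ asymptoticValues f) ∪
          f '' (criticalValues h ∪ asymptoticValues h)) := closure_mono hsub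
    _ = SingInv f ∪ closure (f '' (criticalValues h ∪ asymptoticValues h)) := closure_union
    _ ⊆ SingInv f ∪ closure (f '' SingInv h) :=
        union_subset_union_right _ (closure_mono (image_mono subset_closure))

lemma singInv_id : SingInv (id : ℂ → ℂ) = ∅ := by
  have hcrit : criticalValues (id : ℂ → ℂ) = ∅ :=
    eq_empty_of_forall_notMem fun _ ⟨_, hd, _⟩ => by rw [deriv_id] at hd; exact one_ne_zero hd
  have hasymp : asymptoticValues (id : ℂ → ℂ) = ∅ :=
    eq_empty_of_forall_notMem fun v ⟨_, _, hγ_escape, hv⟩ =>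
      not_tendsto_atTop_of_tendsto_nhds hv.norm hγ_escape
  rw [SingInv, hcrit, hasymp, empty_union, closure_empty]

lemma singInv_subset_postSing (f : ℂ → ℂ) : SingInv f ⊆ postSing f :=
  fun s hs => subset_closure (mem_iUnion.2 ⟨0, s, hs, rfl⟩)

lemma mapsTo_postSing_self {f : ℂ → ℂ} (hf : Continuous f) :
    MapsTo f (postSing f) (postSing f) := by
  refine MapsTo.closure (fun x hx => ?_) hf
  obtain ⟨n, s, hs, rfl⟩ := mem_iUnion.1 hx
  exact mem_iUnion.2 ⟨n + 1, s, hs, iterate_succ_apply' f n s⟩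

lemma Function.Commute.mapsTo_postSing {f h : ℂ → ℂ} (hcomm : Function.Commute h f)
    (hh : Continuous h) (hS : MapsTo h (SingInv f) (SingInv f)) :
    MapsTo h (postSing f) (postSing f) := by
  refine MapsTo.closure (fun x hx => ?_) hh
  obtain ⟨n, s, hs, rfl⟩ := mem_iUnion.1 hx
  exact mem_iUnion.2 ⟨n, h s, hS hs, (hcomm.iterate_right n s).symm⟩

lemma postSing_subset_of_mapsTo {f : ℂ → ℂ} {B : Set ℂ} (hB : IsClosed B) (hSB : SingInv f ⊆ B)
    (hfB : MapsTo f B B) : postSing f ⊆ B :=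
  closure_minimal (iUnion_subset fun n => (image_mono hSB).trans (hfB.iterate n).image_subset) hB

lemma singInv_comp_subset_of_mapsTo {f h : ℂ → ℂ} {B : Set ℂ} (hB : IsClosed B)
    (hf : Differentiable ℂ f) (hf_ne : ∀ v, ∃ z, f z ≠ v) (hh : Differentiable ℂ h)
    (hfB : MapsTo f B B) (hSf : SingInv f ⊆ B) (hSh : SingInv h ⊆ B) : SingInv (f ∘ h) ⊆ B :=
  (singInv_comp_subset hf hf_ne hh).trans
    (union_subset hSf (closure_minimal ((image_mono hSh).trans hfB.image_subset) hB))

lemma singInv_foldr_comp_subset {B : Set ℂ} (hB : IsClosed B) {l : List (ℂ → ℂ)}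
    (hl : ∀ f ∈ l, TranscendentalEntire f ∧ SingInv f ⊆ B ∧ MapsTo f B B) :
    Differentiable ℂ (l.foldr (· ∘ ·) id) ∧ SingInv (l.foldr (· ∘ ·) id) ⊆ B ∧
      MapsTo (l.foldr (· ∘ ·) id) B B := by
  induction l with
  | nil => exact ⟨differentiable_id, by simp [singInv_id], mapsTo_id B⟩
  | cons f l ih =>
    obtain ⟨hf, hSf, hfB⟩ := hl f List.mem_cons_self
    obtain ⟨hd, hS, hmaps⟩ := ih fun f' hf' => hl f' (List.mem_cons_of_mem f hf')
    rw [List.foldr_cons]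
    exact ⟨hf.1.comp hd, singInv_comp_subset_of_mapsTo hB hf.1 hf.exists_ne hd hfB hSf hS,
      hfB.comp hmaps⟩

theorem postSing_multi_comp_subset_general
    (n : ℕ) (g : Fin n → ℂ → ℂ)
    (htrans : ∀ i, TranscendentalEntire (g i))
    (hperm : ∀ i j, g i ∘ g j = g j ∘ g i)
    (hsing : ∀ i j, i ≠ j → g i '' SingInv (g j) ⊆ SingInv (g j)) :
    postSing ((List.ofFn g).foldr (· ∘ ·) id) ⊆ ⋃ i : Fin n, postSing (g i) := by
  set B := ⋃ i, postSing (g i)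
  have hB : IsClosed B := isClosed_iUnion_of_finite fun _ => isClosed_closure
  have hgB : ∀ j, MapsTo (g j) B B := fun j => mapsTo_iUnion_iUnion fun i => by
    have hcont := (htrans j).1.continuous
    obtain rfl | hji := eq_or_ne j i
    · exact mapsTo_postSing_self hcont
    · exact Function.Commute.mapsTo_postSing (fun x => congrFun (hperm j i) x) hcont
        (mapsTo_iff_image_subset.2 (hsing j i hji))
  have hSB : ∀ j, SingInv (g j) ⊆ B := fun j =>
    (singInv_subset_postSing (g j)).trans (subset_iUnion (fun i => postSing (g i)) j)
  obtain ⟨-, hS, hmaps⟩ := singInv_foldr_comp_subset hB (l := List.ofFn g)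
    (List.forall_mem_ofFn_iff.2 fun j => ⟨htrans j, hSB j, hgB j⟩)
  exact postSing_subset_of_mapsTo hB hS hmaps

/-- For pairwise permutable transcendental entire functions
`g_1, …, g_n` of bounded type with `g_i(Sing(g_j⁻¹)) ⊆ Sing(g_j⁻¹)` for `i ≠ j`,
one has `P(g_1 ∘ ⋯ ∘ g_n) ⊆ ⋃_i P(g_i)`. -/
theorem postSing_multi_comp_subset
    (n : ℕ) (hn : 1 ≤ n) (g : Fin n → ℂ → ℂ)
    (htrans : ∀ i, TranscendentalEntire (g i))
    (hbd : ∀ i, BoundedType (g i))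
    (hperm : ∀ i j, g i ∘ g j = g j ∘ g i)
    (hsing : ∀ i j, i ≠ j → g i '' SingInv (g j) ⊆ SingInv (g j)) :
    postSing ((List.ofFn g).foldr (· ∘ ·) id) ⊆ ⋃ i : Fin n, postSing (g i) :=
  postSing_multi_comp_subset_general n g htrans hperm hsing
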